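/- Monotonicity of the Bessel quotient in order on the first interval: for fixed r ∈ (0, j_{ν,1}) and 0 ≤ ν < μ with r < j_{μ,1}, one has r·J_ν′(r)/J_ν(r) < r·J_μ′(r)/J_μ(r). -/

import Mathlib

/-- Bessel function of the first kind. -/
noncomputable def besselJ (ν x : ℝ) : ℝ :=
  ∑' k : ℕ, (-1 : ℝ) ^ k * (x / 2) ^ (ν + 2 * (k : ℝ)) /
    (Nat.factorial k * Real.Gamma (ν + k + 1))

/-- The first positive zero of the Bessel function `J ν`. -/
noncomputable def besselJZero (ν : ℝ) : ℝ :=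
  sInf {x : ℝ | 0 < x ∧ besselJ ν x = 0}

/-!
Write `J_ν(x) = (x/2)^ν g_ν(x²)`, where `g_ν(y) = ∑ (-y/4)ⁿ / (n! Γ(ν+n+1))` is entire and
solves `4y g'' + 4(ν+1) g' + g = 0`. Then `r J_ν'(r) / J_ν(r) = ν + 2y g_ν'(y) / g_ν(y)` at
`y = r²`, so the claim says that `Q = (μ - ν) g_ν g_μ + 2y (g_ν g_μ' - g_μ g_ν')` is positive at
`r²`. The two differential equations give `(y^s Q)' = (μ² - ν²)/2 · y^(s-1) g_ν g_μ` with
`s = (ν + μ)/2`, which is positive as long as `g_ν` and `g_μ` are, i.e. below the first zeros of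
`J_ν` and `J_μ`; since `y^s Q` vanishes at `0`, it is positive at `r²`.
-/

open FormalMultilinearSeries Filter Set Real Topology
open scoped Nat

section PowerSeries

variable {𝕜 : Type*} [NontriviallyNormedField 𝕜] {c : ℕ → 𝕜}

def derivCoeff (c : ℕ → 𝕜) (n : ℕ) : 𝕜 := (n + 1) * c (n + 1)

theorem ofScalars_derivCoeff (c : ℕ → 𝕜) :
    ofScalars 𝕜 (derivCoeff c) =
      (ContinuousLinearMap.apply 𝕜 𝕜 1).compFormalMultilinearSeries
        (ofScalars 𝕜 c).derivSeries := by
  ext n : 1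
  rw [← mkPiRing_coeff_eq (ofScalars 𝕜 _),
    ← mkPiRing_coeff_eq (ContinuousLinearMap.compFormalMultilinearSeries _ _)]
  congr 1
  rw [coeff_ofScalars]
  change _ = (ofScalars 𝕜 c).derivSeries.coeff n 1
  rw [derivSeries_coeff_one, coeff_ofScalars, derivCoeff, nsmul_eq_mul]
  push_cast
  ring

theorem radius_le_radius_ofScalars_derivCoeff (c : ℕ → 𝕜) :
    (ofScalars 𝕜 c).radius ≤ (ofScalars 𝕜 (derivCoeff c)).radius := by
  rw [ofScalars_derivCoeff]
  exact (radius_le_radius_derivSeries _).trans (radius_le_radius_continuousLinearMap_comp _ _)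

theorem hasSum_ofScalarsSum [CompleteSpace 𝕜] {y : 𝕜} (hy : ‖y‖ₑ < (ofScalars 𝕜 c).radius) :
    HasSum (fun n ↦ c n * y ^ n) (ofScalarsSum c y) := by
  have h := (ofScalars 𝕜 c).hasSum (x := y) (by simpa using hy)
  simp only [ofScalars_apply_eq, smul_eq_mul] at h
  exact h

theorem hasDerivAt_ofScalarsSum [CompleteSpace 𝕜] {y : 𝕜} (hy : ‖y‖ₑ < (ofScalars 𝕜 c).radius) :
    HasDerivAt (ofScalarsSum c) (ofScalarsSum (derivCoeff c) y) y := by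
  refine ((ofScalars 𝕜 c).hasFDerivAt_sum hy).hasDerivAt.congr_deriv ?_
  have hs := (ofScalars 𝕜 c).derivSeries.summable (x := y)
    (by simpa using hy.trans_le (radius_le_radius_derivSeries _))
  rw [ofScalarsSum, ofScalars_derivCoeff, FormalMultilinearSeries.sum, FormalMultilinearSeries.sum]
  exact (ContinuousLinearMap.apply 𝕜 𝕜 1).map_tsum hs

theorem hasSum_mul_ofScalarsSum_derivCoeff [CompleteSpace 𝕜] {y : 𝕜}
    (hy : ‖y‖ₑ < (ofScalars 𝕜 (derivCoeff c)).radius) :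
    HasSum (fun n ↦ n * c n * y ^ n) (y * ofScalarsSum (derivCoeff c) y) := by
  rw [← hasSum_nat_add_iff' 1]
  simpa [derivCoeff, pow_succ, mul_comm, mul_left_comm, mul_assoc] using
    (hasSum_ofScalarsSum hy).mul_left y

theorem radius_ofScalars_derivCoeff_eq_top (hc : (ofScalars 𝕜 c).radius = ⊤) :
    (ofScalars 𝕜 (derivCoeff c)).radius = ⊤ :=
  top_unique (hc ▸ radius_le_radius_ofScalars_derivCoeff c)

theorem deriv_ofScalarsSum [CompleteSpace 𝕜] (hc : (ofScalars 𝕜 c).radius = ⊤) :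
    deriv (ofScalarsSum c : 𝕜 → 𝕜) = ofScalarsSum (derivCoeff c) :=
  funext fun _ ↦ (hasDerivAt_ofScalarsSum (hc ▸ enorm_lt_top)).deriv

theorem differentiable_ofScalarsSum [CompleteSpace 𝕜] (hc : (ofScalars 𝕜 c).radius = ⊤) :
    Differentiable 𝕜 (ofScalarsSum c : 𝕜 → 𝕜) :=
  fun _ ↦ (hasDerivAt_ofScalarsSum (hc ▸ enorm_lt_top)).differentiableAt

end PowerSeries

structure IsReducedBesselSolution (ν : ℝ) (g : ℝ → ℝ) : Prop where
  differentiable : Differentiable ℝ g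
  differentiable_deriv : Differentiable ℝ (deriv g)
  ode : ∀ y, 4 * y * deriv (deriv g) y + 4 * (ν + 1) * deriv g y + g y = 0

/-- For `a = reducedBesselJ ν` and `b = reducedBesselJ μ`, `(x / 2) ^ (ν + μ)` times this at `x ^ 2`
is `x * (J_ν J_μ' - J_μ J_ν')(x)`. -/
noncomputable def reducedWronskian (ν μ : ℝ) (a b : ℝ → ℝ) (y : ℝ) : ℝ :=
  (μ - ν) * a y * b y + 2 * y * (a y * deriv b y - b y * deriv a y)

section Wronskian

variable {ν μ : ℝ} {a b : ℝ → ℝ}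

theorem hasDerivAt_rpow_mul_reducedWronskian (ha : IsReducedBesselSolution ν a)
    (hb : IsReducedBesselSolution μ b) {y : ℝ} (hy : 0 < y) :
    HasDerivAt (fun y ↦ y ^ ((ν + μ) / 2) * reducedWronskian ν μ a b y)
      ((μ ^ 2 - ν ^ 2) / 2 * y ^ ((ν + μ) / 2 - 1) * (a y * b y)) y := by
  have ha1 := (ha.differentiable y).hasDerivAt
  have ha2 := (ha.differentiable_deriv y).hasDerivAt
  have hb1 := (hb.differentiable y).hasDerivAt
  have hb2 := (hb.differentiable_deriv y).hasDerivAt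
  have hW := (((hasDerivAt_const y (μ - ν)).mul ha1).mul hb1).add
    (((hasDerivAt_id y).const_mul 2).mul ((ha1.mul hb2).sub (hb1.mul ha2)))
  refine ((hasDerivAt_rpow_const (p := (ν + μ) / 2) (.inl hy.ne')).mul hW).congr_deriv ?_
  have hpow : y ^ ((ν + μ) / 2) = y ^ ((ν + μ) / 2 - 1) * y := by
    rw [← rpow_add_one hy.ne']
    ring_nf
  simp only [hpow, Pi.add_apply, Pi.mul_apply, Pi.sub_apply, id_eq]
  linear_combination (y ^ ((ν + μ) / 2 - 1) * y / 2) * (a y * hb.ode y - b y * ha.ode y)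

theorem reducedWronskian_pos (ha : IsReducedBesselSolution ν a) (hb : IsReducedBesselSolution μ b)
    (hνμ : |ν| < μ) {Y : ℝ} (hY : 0 < Y) (hab : ∀ y ∈ Ioo 0 Y, 0 < a y * b y) :
    0 < reducedWronskian ν μ a b Y := by
  obtain ⟨hνμ₁, hνμ₂⟩ := abs_lt.1 hνμ
  have hs : 0 < (ν + μ) / 2 := by linarith
  have hc : 0 < (μ ^ 2 - ν ^ 2) / 2 := by nlinarith
  have hcont : ContinuousOn (fun y ↦ y ^ ((ν + μ) / 2) * reducedWronskian ν μ a b y) (Icc 0 Y) := by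
    have := ha.differentiable.continuous
    have := ha.differentiable_deriv.continuous
    have := hb.differentiable.continuous
    have := hb.differentiable_deriv.continuous
    have := continuous_rpow_const hs.le
    unfold reducedWronskian
    fun_prop
  have hmono := strictMonoOn_of_deriv_pos (convex_Icc 0 Y) hcont fun y hy ↦ by
    rw [interior_Icc] at hy
    rw [(hasDerivAt_rpow_mul_reducedWronskian ha hb hy.1).deriv]
    exact mul_pos (mul_pos hc (rpow_pos_of_pos hy.1 _)) (hab y hy)
  have h := hmono (left_mem_Icc.2 hY.le) (right_mem_Icc.2 hY.le) hY
  simp only [zero_rpow hs.ne', zero_mul] at h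
  exact pos_of_mul_pos_right h (rpow_nonneg hY.le _)

end Wronskian

noncomputable def besselCoeff (ν : ℝ) (n : ℕ) : ℝ :=
  (-1) ^ n / (n ! * Gamma (ν + n + 1) * 4 ^ n)

noncomputable def reducedBesselJ (ν : ℝ) : ℝ → ℝ := ofScalarsSum (besselCoeff ν)

section Bessel

variable {ν : ℝ}

theorem besselCoeff_ne_zero (hν : -1 < ν) (n : ℕ) : besselCoeff ν n ≠ 0 := by
  have : 0 < Gamma (ν + n + 1) := Gamma_pos_of_pos (by linarith [n.cast_nonneg (α := ℝ)])
  unfold besselCoeff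
  positivity

theorem besselCoeff_succ (hν : -1 < ν) (n : ℕ) :
    besselCoeff ν (n + 1) = -besselCoeff ν n / (4 * (n + 1) * (ν + n + 1)) := by
  have hs : ν + n + 1 ≠ 0 := by linarith [n.cast_nonneg (α := ℝ)]
  have hΓ : Gamma (ν + ↑(n + 1) + 1) = (ν + n + 1) * Gamma (ν + n + 1) := by
    rw [← Gamma_add_one hs]; push_cast; ring_nf
  have : Gamma (ν + n + 1) ≠ 0 := (Gamma_pos_of_pos (by linarith [n.cast_nonneg (α := ℝ)])).ne'
  rw [besselCoeff, besselCoeff, hΓ, Nat.factorial_succ]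
  push_cast
  field_simp
  ring

theorem radius_ofScalars_besselCoeff (hν : -1 < ν) : (ofScalars ℝ (besselCoeff ν)).radius = ⊤ := by
  refine ofScalars_radius_eq_top_of_tendsto _ _ (.of_forall (besselCoeff_ne_zero hν)) ?_
  have hratio (n : ℕ) :
      ‖besselCoeff ν n.succ‖ / ‖besselCoeff ν n‖ = (4 * (n + 1) * (ν + n + 1))⁻¹ := by
    have : 0 < ν + n + 1 := by linarith [n.cast_nonneg (α := ℝ)]
    rw [besselCoeff_succ hν, norm_div, norm_neg,
      norm_of_nonneg (r := 4 * (n + 1) * (ν + n + 1)) (by positivity),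
      div_div_cancel_left' (norm_ne_zero_iff.2 (besselCoeff_ne_zero hν n))]
  simp_rw [hratio]
  refine tendsto_inv_atTop_zero.comp (tendsto_atTop_mono (fun n ↦ ?_) tendsto_natCast_atTop_atTop)
  nlinarith [n.cast_nonneg (α := ℝ)]

theorem reducedBesselJ_ode (hν : -1 < ν) (y : ℝ) :
    4 * y * deriv (deriv (reducedBesselJ ν)) y + 4 * (ν + 1) * deriv (reducedBesselJ ν) y +
      reducedBesselJ ν y = 0 := by
  have hc := radius_ofScalars_besselCoeff hν
  have hd := radius_ofScalars_derivCoeff_eq_top hc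
  have he := radius_ofScalars_derivCoeff_eq_top hd
  simp only [reducedBesselJ, deriv_ofScalarsSum hc, deriv_ofScalarsSum hd]
  have hy : ∀ {a : ℕ → ℝ}, (ofScalars ℝ a).radius = ⊤ → ‖y‖ₑ < (ofScalars ℝ a).radius :=
    fun h ↦ h ▸ enorm_lt_top
  have h2 := hasSum_mul_ofScalarsSum_derivCoeff (hy he)
  have h1 := hasSum_ofScalarsSum (hy hd)
  have h0 := hasSum_ofScalarsSum (hy hc)
  have hsum := ((h2.mul_left 4).add (h1.mul_left (4 * (ν + 1)))).add h0
  rw [mul_assoc 4 y]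
  refine hsum.unique (hasSum_zero.congr_fun fun n ↦ ?_)
  have hn : ν + n + 1 ≠ 0 := by linarith [n.cast_nonneg (α := ℝ)]
  simp only [derivCoeff, besselCoeff_succ hν]
  field_simp
  ring

theorem isReducedBesselSolution_reducedBesselJ (hν : -1 < ν) :
    IsReducedBesselSolution ν (reducedBesselJ ν) where
  differentiable := differentiable_ofScalarsSum (radius_ofScalars_besselCoeff hν)
  differentiable_deriv := by
    rw [reducedBesselJ, deriv_ofScalarsSum (radius_ofScalars_besselCoeff hν)]
    exact differentiable_ofScalarsSum
      (radius_ofScalars_derivCoeff_eq_top (radius_ofScalars_besselCoeff hν))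
  ode := reducedBesselJ_ode hν

theorem besselJ_eq_rpow_mul_reducedBesselJ {x : ℝ} (hx : 0 < x) :
    besselJ ν x = (x / 2) ^ ν * reducedBesselJ ν (x ^ 2) := by
  rw [besselJ, reducedBesselJ, ofScalars_sum_eq, ← tsum_mul_left]
  refine tsum_congr fun k ↦ ?_
  rw [rpow_add (by positivity), show (2 * k : ℝ) = (2 * k : ℕ) by push_cast; ring, rpow_natCast,
    pow_mul, div_pow, div_pow, besselCoeff, smul_eq_mul]
  norm_num
  ring

theorem hasDerivAt_besselJ {x : ℝ} (hν : -1 < ν) (hx : 0 < x) :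
    HasDerivAt (besselJ ν) ((x / 2) ^ ν *
      (ν / x * reducedBesselJ ν (x ^ 2) + 2 * x * deriv (reducedBesselJ ν) (x ^ 2))) x := by
  have hpow : HasDerivAt (fun t ↦ (t / 2) ^ ν) (1 / 2 * ν * (x / 2) ^ (ν - 1)) x :=
    ((hasDerivAt_id x).div_const 2).rpow_const (.inl (by positivity))
  have hg : HasDerivAt (fun t ↦ reducedBesselJ ν (t ^ 2))
      (deriv (reducedBesselJ ν) (x ^ 2) * (2 * x)) x :=
    ((isReducedBesselSolution_reducedBesselJ hν).differentiable (x ^ 2)).hasDerivAt.comp x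
      ((hasDerivAt_pow 2 x).congr_deriv (by ring))
  have heq : besselJ ν =ᶠ[𝓝 x] fun t ↦ (t / 2) ^ ν * reducedBesselJ ν (t ^ 2) :=
    eventually_of_mem (Ioi_mem_nhds hx) fun t ht ↦ besselJ_eq_rpow_mul_reducedBesselJ ht
  refine ((hpow.mul hg).congr_of_eventuallyEq heq).congr_deriv ?_
  rw [rpow_sub_one (by positivity)]
  field_simp

theorem mul_deriv_besselJ_div {x : ℝ} (hν : -1 < ν) (hx : 0 < x)
    (hg : reducedBesselJ ν (x ^ 2) ≠ 0) :
    x * deriv (besselJ ν) x / besselJ ν x =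
      ν + 2 * x ^ 2 * deriv (reducedBesselJ ν) (x ^ 2) / reducedBesselJ ν (x ^ 2) := by
  rw [(hasDerivAt_besselJ hν hx).deriv, besselJ_eq_rpow_mul_reducedBesselJ hx]
  have : (x / 2) ^ ν ≠ 0 := (rpow_pos_of_pos (by positivity) ν).ne'
  field_simp

theorem besselJ_ne_zero_of_lt_besselJZero {x : ℝ} (hx : 0 < x) (hxj : x < besselJZero ν) :
    besselJ ν x ≠ 0 :=
  fun h ↦
    (csInf_le (s := {x | 0 < x ∧ besselJ ν x = 0}) ⟨0, fun _ ht ↦ ht.1.le⟩ ⟨hx, h⟩).not_gt hxj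

theorem reducedBesselJ_zero (ν : ℝ) : reducedBesselJ ν 0 = (Gamma (ν + 1))⁻¹ := by
  simp [reducedBesselJ, besselCoeff]

theorem reducedBesselJ_pos {y : ℝ} (hν : -1 < ν) (hy0 : 0 ≤ y) (hy : y < besselJZero ν ^ 2) :
    0 < reducedBesselJ ν y := by
  have hj : 0 ≤ besselJZero ν := sInf_nonneg fun _ ht ↦ ht.1.le
  have hg0 : 0 < reducedBesselJ ν 0 := by
    rw [reducedBesselJ_zero]
    exact inv_pos.2 (Gamma_pos_of_pos (by linarith))
  have hne : ∀ z ∈ Ico 0 (besselJZero ν ^ 2), reducedBesselJ ν z ≠ 0 := by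
    rintro z ⟨hz0, hz⟩
    rcases hz0.eq_or_lt with rfl | hz0
    · exact hg0.ne'
    have hJ := besselJ_ne_zero_of_lt_besselJZero (sqrt_pos.2 hz0)
      ((sqrt_lt_sqrt hz0.le hz).trans_eq (sqrt_sq hj))
    rw [besselJ_eq_rpow_mul_reducedBesselJ (sqrt_pos.2 hz0), sq_sqrt hz0.le] at hJ
    exact right_ne_zero_of_mul hJ
  by_contra! hle
  obtain ⟨z, hz, hz0⟩ := isPreconnected_Ico.intermediate_value ⟨hy0, hy⟩
    (left_mem_Ico.2 (hy0.trans_lt hy))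
    (isReducedBesselSolution_reducedBesselJ hν).differentiable.continuous.continuousOn ⟨hle, hg0.le⟩
  exact hne z hz hz0

end Bessel

theorem besselJ_log_deriv_mono_in_order (ν μ r : ℝ) (hν : 0 ≤ ν) (hνμ : ν < μ)
    (hr : r ∈ Set.Ioo 0 (besselJZero ν)) (hrμ : r < besselJZero μ) :
    r * deriv (besselJ ν) r / besselJ ν r < r * deriv (besselJ μ) r / besselJ μ r := by
  obtain ⟨hr0, hrν⟩ := hr
  have hν₁ : -1 < ν := by linarith
  have hμ₁ : -1 < μ := by linarith
  have hpos {κ : ℝ} (hκ : -1 < κ) (hrκ : r < besselJZero κ) (y : ℝ) (hy : y ∈ Icc 0 (r ^ 2)) :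
      0 < reducedBesselJ κ y :=
    reducedBesselJ_pos hκ hy.1 (hy.2.trans_lt (pow_lt_pow_left₀ hrκ hr0.le two_ne_zero))
  have ha := hpos hν₁ hrν (r ^ 2) (right_mem_Icc.2 (sq_nonneg r))
  have hb := hpos hμ₁ hrμ (r ^ 2) (right_mem_Icc.2 (sq_nonneg r))
  have hW := reducedWronskian_pos (isReducedBesselSolution_reducedBesselJ hν₁)
    (isReducedBesselSolution_reducedBesselJ hμ₁) (by rwa [abs_of_nonneg hν]) (by positivity)
    fun y hy ↦ mul_pos (hpos hν₁ hrν y (Ioo_subset_Icc_self hy))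
      (hpos hμ₁ hrμ y (Ioo_subset_Icc_self hy))
  rw [mul_deriv_besselJ_div hν₁ hr0 ha.ne', mul_deriv_besselJ_div hμ₁ hr0 hb.ne',
    add_div' _ _ _ ha.ne', add_div' _ _ _ hb.ne', div_lt_div_iff₀ ha hb]
  unfold reducedWronskian at hW
  linear_combination hW
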